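/- arXiv:math/0703900 — 5 statements merged into one kernel-verified Lean document; each statement's English description precedes it below -/
import Mathlib

section
/- The number of rank-derangements of a standard 52-card deck (13 ranks, 4 suits) equals 1309302175551177162931045000259922525308763433362019257020678406144. -/
/-- The number of rank-derangements of a deck with `n` ranks and 4 suits:
permutations of `Fin n × Fin 4` (first coordinate = rank) such that every card
is sent to a card of a different rank. -/
def R (n : ℕ) : ℕ :=
  (Finset.univ.filter fun σ : Equiv.Perm (Fin n × Fin 4) => ∀ c, (σ c).1 ≠ c.1).card

namespace RankDerangement

open Finset

/-- coefficients of the rook polynomial of a `4 × 4` block -/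
def cc (j : ℕ) : ℕ := if j = 0 then 1 else if j = 1 then 16 else if j = 2 then 72
  else if j = 3 then 96 else if j = 4 then 24 else 0

/-- size of the domain of a partial function on `Fin 4` -/
def d4 (q : Fin 4 → Option (Fin 4)) : ℕ := (Finset.univ.filter fun s => (q s).isSome).card

/-- partial injections on `Fin 4` -/
def PI4 : Finset (Fin 4 → Option (Fin 4)) :=
  Finset.univ.filter fun q => ∀ a b x, q a = some x → q b = some x → a = b

lemma PI4_count : ∀ j ∈ Finset.range 5, (PI4.filter fun q => d4 q = j).card = cc j := by decide

lemma d4_le (q : Fin 4 → Option (Fin 4)) : d4 q ≤ 4 := by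
  have := Finset.card_filter_le (Finset.univ : Finset (Fin 4)) (fun s => (q s).isSome)
  simpa [d4] using this

/-- coefficients of the `n`-th power of the rook polynomial -/
def r : ℕ → ℕ → ℕ
  | 0, k => if k = 0 then 1 else 0
  | n+1, k => ∑ j ∈ Finset.range 5, if j ≤ k then cc j * r n (k - j) else 0

lemma r_vanish : ∀ n k, 4 * n < k → r n k = 0 := by
  intro n
  induction n with
  | zero => intro k hk; simp [r]; omega
  | succ n ih =>
    intro k hk
    rw [r]
    refine Finset.sum_eq_zero fun j hj => ?_
    rw [Finset.mem_range] at hj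
    split_ifs with h
    · rw [ih (k - j) (by omega), mul_zero]
    · rfl

/-- reindexing lemma -/
lemma reindex (n : ℕ) (w : ℕ → ℤ) : ∀ j ∈ Finset.range 5,
    (cc j : ℤ) * ∑ k ∈ Finset.range (4 * n + 1), (r n k : ℤ) * w (j + k)
    = ∑ k ∈ Finset.range (4 * (n+1) + 1),
        (if j ≤ k then (cc j : ℤ) * (r n (k - j) : ℤ) else 0) * w k := by
  intro j hj
  rw [Finset.mem_range] at hj
  rw [Finset.mul_sum]
  have hsub : Finset.Ico j (j + (4 * n + 1)) ⊆ Finset.range (4 * (n+1) + 1) := by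
    intro k hk
    rw [Finset.mem_Ico] at hk
    rw [Finset.mem_range]
    omega
  rw [← Finset.sum_subset hsub (by
    intro k hk hk'
    rw [Finset.mem_range] at hk
    rw [Finset.mem_Ico] at hk'
    by_cases h : j ≤ k
    · rw [if_pos h, r_vanish n (k - j) (by omega), Nat.cast_zero, mul_zero, zero_mul]
    · rw [if_neg h, zero_mul])]
  rw [Finset.sum_Ico_eq_sum_range]
  refine Finset.sum_congr (by congr 1; omega) fun k _ => ?_
  rw [if_pos (Nat.le_add_right j k), Nat.add_sub_cancel_left]
  ring

/-- the key convolution lemma -/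
lemma conv (n : ℕ) (w : ℕ → ℤ) :
    ∑ f ∈ Fintype.piFinset (fun _ : Fin n => PI4), w (∑ i, d4 (f i)) =
    ∑ k ∈ Finset.range (4 * n + 1), (r n k : ℤ) * w k := by
  induction n generalizing w with
  | zero => simp [r]
  | succ n ih =>
    have step1 : ∑ f ∈ Fintype.piFinset (fun _ : Fin (n+1) => PI4), w (∑ i, d4 (f i))
        = ∑ q ∈ PI4, ∑ g ∈ Fintype.piFinset (fun _ : Fin n => PI4),
            w (d4 q + ∑ i, d4 (g i)) := by
      rw [← Finset.sum_product']
      refine Finset.sum_nbij' (i := fun f => (f 0, Fin.tail f))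
        (j := fun x => Fin.cons x.1 x.2) ?_ ?_ ?_ ?_ ?_
      · intro f hf
        rw [Fintype.mem_piFinset] at hf
        simp only [Finset.mem_product]
        exact ⟨hf 0, Fintype.mem_piFinset.2 fun i => hf _⟩
      · intro x hx
        rw [Finset.mem_product] at hx
        rw [Fintype.mem_piFinset]
        intro a
        refine Fin.cases ?_ ?_ a
        · simpa using hx.1
        · intro i; simpa [Fin.cons_succ] using Fintype.mem_piFinset.1 hx.2 i
      · intro f _; exact Fin.cons_self_tail f
      · intro x _; simp
      · intro f _
        congr 1
        rw [Fin.sum_univ_succ]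
        simp [Fin.tail]
    rw [step1]
    have step2 : ∀ q ∈ PI4, ∑ g ∈ Fintype.piFinset (fun _ : Fin n => PI4),
        w (d4 q + ∑ i, d4 (g i)) = ∑ k ∈ Finset.range (4 * n + 1),
          (r n k : ℤ) * w (d4 q + k) :=
      fun q _ => ih (fun m => w (d4 q + m))
    rw [Finset.sum_congr rfl step2]
    -- group the `q`-sum by `d4 q`
    have step3 : ∑ q ∈ PI4, ∑ k ∈ Finset.range (4 * n + 1), (r n k : ℤ) * w (d4 q + k)
        = ∑ j ∈ Finset.range 5, (cc j : ℤ) *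
            ∑ k ∈ Finset.range (4 * n + 1), (r n k : ℤ) * w (j + k) := by
      rw [← Finset.sum_fiberwise_of_maps_to (g := d4) (t := Finset.range 5)
        (fun q _ => Finset.mem_range.2 (Nat.lt_succ_of_le (d4_le q)))]
      refine Finset.sum_congr rfl fun j hj => ?_
      rw [← PI4_count j hj, Finset.card_eq_sum_ones, Nat.cast_sum, Finset.sum_mul]
      refine Finset.sum_congr rfl fun q hq => ?_
      rw [Finset.mem_filter] at hq
      rw [hq.2, Nat.cast_one, one_mul]
    rw [step3]
    rw [Finset.sum_congr rfl (reindex n w), Finset.sum_comm]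
    refine Finset.sum_congr rfl fun k _ => ?_
    rw [← Finset.sum_mul]
    congr 1
    rw [r]
    push_cast
    rfl


lemma card_perm_extend {α : Type*} [Fintype α] [DecidableEq α] (T : Finset α) (g : α → α)
    (hg : Set.InjOn g T) :
    (Finset.univ.filter fun σ : Equiv.Perm α => ∀ c ∈ T, σ c = g c).card
      = (Fintype.card α - T.card).factorial := by
  classical
  set U := T.image g with hUdef
  have hUcard : U.card = T.card := Finset.card_image_of_injOn hg
  have hbij : Function.Bijective (fun x : {x // x ∈ T} =>
      (⟨g x.1, Finset.mem_image_of_mem g x.2⟩ : {x // x ∈ U})) := by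
    rw [Fintype.bijective_iff_injective_and_card]
    refine ⟨fun a b hab => Subtype.ext (hg a.2 b.2 (by simpa using hab)), ?_⟩
    simp only [Fintype.card_coe, hUcard]
  set e1 : {x // x ∈ T} ≃ {x // x ∈ U} := Equiv.ofBijective _ hbij with he1
  have e2 : {x // ¬ x ∈ T} ≃ {x // ¬ x ∈ U} := by
    apply Fintype.equivOfCardEq
    rw [Fintype.card_subtype_compl, Fintype.card_subtype_compl]
    congr 1
    simp only [Fintype.card_coe, hUcard]
  set τ : Equiv.Perm α :=
    ((Equiv.sumCompl (· ∈ T)).symm.trans ((e1.sumCongr e2).trans (Equiv.sumCompl (· ∈ U))))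
    with hτdef
  have hτ : ∀ c ∈ T, τ c = g c := by
    intro c hc
    simp only [hτdef, Equiv.trans_apply, Equiv.sumCompl_symm_apply_of_pos hc,
      Equiv.sumCongr_apply, Sum.map_inl, Equiv.sumCompl_apply_inl]
    rw [he1]
    rfl
  have himg : (Finset.univ.filter fun σ : Equiv.Perm α => ∀ c ∈ T, σ c = g c)
      = (Finset.univ.filter fun π : Equiv.Perm α => ∀ c ∈ T, π c = c).image (fun π => τ * π) := by
    ext σ
    simp only [Finset.mem_filter, Finset.mem_image, Finset.mem_univ, true_and]
    constructor
    · intro h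
      refine ⟨τ⁻¹ * σ, fun c hc => ?_, by group⟩
      rw [Equiv.Perm.mul_apply, h c hc, ← hτ c hc, Equiv.Perm.inv_def, Equiv.symm_apply_apply]
    · rintro ⟨π, hπ, rfl⟩ c hc
      rw [Equiv.Perm.mul_apply, hπ c hc, hτ c hc]
  rw [himg, Finset.card_image_of_injective _ (mul_right_injective τ)]
  rw [← Fintype.card_subtype]
  have e3 : {π : Equiv.Perm α // ∀ c ∈ T, π c = c} ≃ Equiv.Perm {x // ¬ x ∈ T} := by
    refine ((Equiv.subtypeEquivRight ?_).trans
      (Equiv.Perm.subtypeEquivSubtypePerm (fun x => ¬ x ∈ T)).symm)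
    intro π
    simp [not_not]
  rw [Fintype.card_congr e3, Fintype.card_perm, Fintype.card_subtype_compl, Fintype.card_coe]

abbrev Deck (n : ℕ) := Fin n × Fin 4

def pdom {n : ℕ} (p : Deck n → Option (Deck n)) : Finset (Deck n) :=
  Finset.univ.filter fun c => (p c).isSome

def PIn (n : ℕ) : Finset (Deck n → Option (Deck n)) :=
  Finset.univ.filter fun p =>
    (∀ c x, p c = some x → x.1 = c.1) ∧ ∀ c c' x, p c = some x → p c' = some x → c = c'

lemma count_T (n : ℕ) (T : Finset (Deck n)) :
    (Finset.univ.filter fun σ : Equiv.Perm (Deck n) => ∀ c ∈ T, (σ c).1 = c.1).card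
      = ((PIn n).filter fun p => pdom p = T).card * (4 * n - T.card).factorial := by
  classical
  have hcard : Fintype.card (Deck n) = 4 * n := by
    simp [mul_comm]
  rw [Finset.card_eq_sum_card_fiberwise
    (f := fun σ c => if c ∈ T then some (σ c) else none)
    (t := (PIn n).filter fun p => pdom p = T)
    (by
      intro σ hσ
      rw [Finset.mem_coe, Finset.mem_filter] at hσ ⊢
      refine ⟨Finset.mem_filter.2 ⟨Finset.mem_univ _, ?_, ?_⟩, ?_⟩
      · intro c x hx
        by_cases hc : c ∈ T
        · simp only [hc, if_true] at hx
          obtain rfl : σ c = x := by injection hx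
          exact hσ.2 c hc
        · simp only [hc, if_false] at hx
          cases hx
      · intro c c' x hx hx'
        by_cases hc : c ∈ T
        · by_cases hc' : c' ∈ T
          · simp only [hc, if_true] at hx
            simp only [hc', if_true] at hx'
            have h1 : σ c = x := by injection hx
            have h2 : σ c' = x := by injection hx'
            exact σ.injective (h1.trans h2.symm)
          · simp only [hc', if_false] at hx'
            cases hx'
        · simp only [hc, if_false] at hx
          cases hx
      · ext c
        simp only [pdom, Finset.mem_filter, Finset.mem_univ, true_and]
        by_cases hc : c ∈ T
        · simp [hc]
        · simp [hc])]
  rw [Finset.sum_congr rfl (fun p hp => ?_), Finset.sum_const, smul_eq_mul]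
  rw [Finset.mem_filter, PIn, Finset.mem_filter] at hp
  obtain ⟨⟨-, hrank, hinj⟩, hdom⟩ := hp
  have hsome : ∀ c, c ∈ T ↔ (p c).isSome := by
    intro c
    rw [← hdom]
    simp [pdom]
  have hset : ((Finset.univ.filter fun σ : Equiv.Perm (Deck n) => ∀ c ∈ T, (σ c).1 = c.1).filter
        fun σ => (fun c => if c ∈ T then some (σ c) else none) = p)
      = Finset.univ.filter fun σ : Equiv.Perm (Deck n) => ∀ c ∈ T, σ c = (p c).getD c := by
    ext σ
    simp only [Finset.mem_filter, Finset.mem_univ, true_and]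
    constructor
    · rintro ⟨-, hB⟩ c hc
      have h := congrFun hB c
      rw [if_pos hc] at h
      rw [← h]
      rfl
    · intro hC
      have hval : ∀ c ∈ T, p c = some (σ c) := by
        intro c hc
        obtain ⟨x, hx⟩ := Option.isSome_iff_exists.mp ((hsome c).1 hc)
        rw [hx, hC c hc, hx]
        rfl
      refine ⟨?_, ?_⟩
      · intro c hc
        have := hrank c (σ c) (hval c hc)
        exact this
      · funext c
        by_cases hc : c ∈ T
        · rw [if_pos hc, hval c hc]
        · rw [if_neg hc]
          symm
          rw [← Option.not_isSome_iff_eq_none]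
          exact fun hs => hc ((hsome c).2 hs)
  rw [hset, card_perm_extend T (fun c => (p c).getD c) ?_, hcard]
  · intro c₁ h₁ c₂ h₂ he
    rw [Finset.mem_coe] at h₁ h₂
    obtain ⟨x₁, hx₁⟩ := Option.isSome_iff_exists.mp ((hsome c₁).1 h₁)
    obtain ⟨x₂, hx₂⟩ := Option.isSome_iff_exists.mp ((hsome c₂).1 h₂)
    simp only [hx₁, hx₂, Option.getD_some] at he
    subst he
    exact hinj c₁ c₂ x₁ hx₁ hx₂

lemma R_eq_sum (n : ℕ) : ((R n : ℤ)) =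
    ∑ p ∈ PIn n, (-1 : ℤ) ^ (pdom p).card * ((4 * n - (pdom p).card).factorial : ℤ) := by
  classical
  have h1 : (R n : ℤ) = ∑ σ : Equiv.Perm (Deck n),
      if (Finset.univ.filter fun c => (σ c).1 = c.1) = (∅ : Finset (Deck n)) then (1:ℤ)
      else 0 := by
    rw [R, Finset.card_filter, Nat.cast_sum]
    refine Finset.sum_congr rfl fun σ _ => ?_
    rw [apply_ite (fun m : ℕ => (m : ℤ)), Nat.cast_one, Nat.cast_zero]
    have hiff : (∀ c, (σ c).1 ≠ c.1) ↔
        (Finset.univ.filter fun c => (σ c).1 = c.1) = (∅ : Finset (Deck n)) := by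
      rw [Finset.filter_eq_empty_iff]
      simp
    exact if_congr hiff rfl rfl
  have h2 : ∀ σ : Equiv.Perm (Deck n),
      (if (Finset.univ.filter fun c => (σ c).1 = c.1) = (∅ : Finset (Deck n)) then (1:ℤ)
        else 0)
      = ∑ T ∈ Finset.univ.powerset,
          if (∀ c ∈ T, (σ c).1 = c.1) then (-1 : ℤ) ^ T.card else 0 := by
    intro σ
    rw [← Finset.sum_powerset_neg_one_pow_card, ← Finset.sum_filter]
    refine (Finset.sum_congr ?_ fun _ _ => rfl).symm
    ext T
    simp only [Finset.mem_filter, Finset.mem_powerset, Finset.subset_univ, true_and,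
      Finset.subset_iff, Finset.mem_filter, Finset.mem_univ, true_and]
    tauto
  rw [h1, Finset.sum_congr rfl fun σ _ => h2 σ, Finset.sum_comm]
  have h5 : ∀ T ∈ Finset.univ.powerset,
      (∑ σ : Equiv.Perm (Deck n), if (∀ c ∈ T, (σ c).1 = c.1) then (-1 : ℤ) ^ T.card else 0)
      = (((PIn n).filter fun p => pdom p = T).card * (4 * n - T.card).factorial : ℕ) *
          (-1 : ℤ) ^ T.card := by
    intro T _
    rw [← Finset.sum_filter, Finset.sum_const, nsmul_eq_mul, count_T n T]
  rw [Finset.sum_congr rfl h5]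
  rw [← Finset.sum_fiberwise_of_maps_to (g := pdom) (t := Finset.univ.powerset)
      (fun p _ => Finset.mem_powerset.2 (Finset.subset_univ _))]
  refine Finset.sum_congr rfl fun T _ => ?_
  have hconst : ∀ p ∈ (PIn n).filter fun p => pdom p = T,
      (-1 : ℤ) ^ (pdom p).card * ((4 * n - (pdom p).card).factorial : ℤ)
        = (-1 : ℤ) ^ T.card * ((4 * n - T.card).factorial : ℤ) := by
    intro p hp
    rw [(Finset.mem_filter.1 hp).2]
  rw [Finset.sum_congr rfl hconst, Finset.sum_const, nsmul_eq_mul]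
  push_cast
  ring

lemma sum_PIn_eq (n : ℕ) (w : ℕ → ℤ) :
    ∑ p ∈ PIn n, w (pdom p).card =
      ∑ f ∈ Fintype.piFinset (fun _ : Fin n => PI4), w (∑ i, d4 (f i)) := by
  refine Finset.sum_nbij' (i := fun p i s => (p (i, s)).map Prod.snd)
    (j := fun f c => (f c.1 c.2).map (fun s => (c.1, s))) ?_ ?_ ?_ ?_ ?_
  · intro p hp
    rw [PIn, Finset.mem_filter] at hp
    obtain ⟨-, hrank, hinj⟩ := hp
    rw [Fintype.mem_piFinset]
    intro a
    rw [PI4, Finset.mem_filter]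
    refine ⟨Finset.mem_univ _, ?_⟩
    intro s t x hs ht
    rw [Option.map_eq_some_iff] at hs ht
    obtain ⟨y, hy, hy2⟩ := hs
    obtain ⟨z, hz, hz2⟩ := ht
    have h1 : y.1 = a := hrank (a, s) y hy
    have h2 : z.1 = a := hrank (a, t) z hz
    have hyz : y = z := by
      refine Prod.ext (h1.trans h2.symm) (hy2.trans hz2.symm)
    have := hinj (a, s) (a, t) y hy (hyz ▸ hz)
    exact (Prod.ext_iff.mp this).2
  · intro f hf
    rw [Fintype.mem_piFinset] at hf
    rw [PIn, Finset.mem_filter]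
    refine ⟨Finset.mem_univ _, ?_, ?_⟩
    · intro c x hx
      rw [Option.map_eq_some_iff] at hx
      obtain ⟨s, -, hs2⟩ := hx
      rw [← hs2]
    · intro c c' x hx hx'
      rw [Option.map_eq_some_iff] at hx hx'
      obtain ⟨s, hs, hs2⟩ := hx
      obtain ⟨s', hs', hs2'⟩ := hx'
      have hc1 : c.1 = x.1 := by rw [← hs2]
      have hc1' : c'.1 = x.1 := by rw [← hs2']
      have hxs : x.2 = s := by rw [← hs2]
      have hxs' : x.2 = s' := by rw [← hs2']
      have hq := Finset.mem_filter.1 (hf c.1) |>.2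
      have hfc : f c.1 c.2 = some x.2 := by rw [hxs]; exact hs
      have hfc' : f c.1 c'.2 = some x.2 := by
        rw [hxs']
        rw [show c.1 = c'.1 from hc1.trans hc1'.symm]
        exact hs'
      have h2 : c.2 = c'.2 := hq c.2 c'.2 x.2 hfc hfc'
      exact Prod.ext (hc1.trans hc1'.symm) h2
  · intro p hp
    rw [PIn, Finset.mem_filter] at hp
    obtain ⟨-, hrank, -⟩ := hp
    funext c
    rcases hc : p c with - | x
    · simp [hc]
    · have h1 : x.1 = c.1 := hrank c x hc
      show Option.map (fun s => (c.1, s)) (Option.map Prod.snd (p (c.1, c.2))) = some x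
      rw [show p (c.1, c.2) = some x from hc, Option.map_some, Option.map_some]
      exact congrArg some (Prod.ext h1.symm rfl)
  · intro f _
    funext i s
    rcases hc : f i s with - | x <;> simp [hc]
  · intro p _
    congr 1
    rw [pdom, Finset.card_filter, Fintype.sum_prod_type]
    refine Finset.sum_congr rfl fun i _ => ?_
    rw [d4, Finset.card_filter]
    refine Finset.sum_congr rfl fun s _ => ?_
    simp

/-- list-based computation of `r` for fast evaluation -/
def convQ (l : List ℕ) : List ℕ :=
  (List.range (l.length + 4)).map fun k =>
    ∑ j ∈ Finset.range 5, if j ≤ k then cc j * l.getD (k - j) 0 else 0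

def rl : ℕ → List ℕ
  | 0 => [1]
  | n+1 => convQ (rl n)

lemma rl_length : ∀ n, (rl n).length = 4 * n + 1 := by
  intro n
  induction n with
  | zero => rfl
  | succ n ih =>
    show (convQ (rl n)).length = _
    rw [convQ, List.length_map, List.length_range, ih]
    omega

lemma r_eq_rl : ∀ n k, r n k = (rl n).getD k 0 := by
  intro n
  induction n with
  | zero =>
    intro k
    cases k with
    | zero => rfl
    | succ m => show (if m + 1 = 0 then 1 else 0) = _; simp [rl]
  | succ n ih =>
    intro k
    by_cases hk : k < 4 * (n + 1) + 1
    · have hgd : (rl (n+1)).getD k 0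
          = ∑ j ∈ Finset.range 5, if j ≤ k then cc j * (rl n).getD (k - j) 0 else 0 := by
        show (convQ (rl n)).getD k 0 = _
        rw [convQ, List.getD_eq_getElem?_getD, List.getElem?_map]
        rw [List.getElem?_range (by rw [rl_length]; omega)]
        rfl
      rw [hgd, r]
      exact Finset.sum_congr rfl fun j hj => by simp only [ih]
    · rw [r_vanish (n+1) k (by omega), List.getD_eq_default]
      rw [rl_length]
      omega

lemma rl13 : rl 13 = [1, 208, 20904, 1352416, 63317176, 2286355968, 66274500864, 1584864353280, 31889733303168, 547978858645504, 8134161165644800, 105252850794983424, 1195874963294123008, 12001392087581949952, 106897204313740099584, 848414962333166272512, 6019588771736064405504, 38281822498322914148352, 218683644405946996064256, 1124030206367503712649216, 5205350659089153382318080, 21739757533915099252654080, 81936653202101883358937088, 278792442466454053784125440, 856457318848268962838347776, 2375107083460873825743273984, 5943418300909605336033263616, 13411658611783123462206259200, 27266846764215411046147424256, 49888716764060350279204208640, 82032877163176103200828686336, 121028385182593948745868509184, 159913383565757439686505136128, 188820916758223736558378287104, 198761291157362514223920316416, 186016114662793760931122774016, 154308224898784201844862222336, 113078073865975333400686362624,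 72925355758796236529483120640, 41214531997403741694399086592, 20314896422012315375385968640, 8685452212593567389102112768, 3200508341076271076179181568, 1008829460845176117163720704, 269536240818933486512504832, 60349919423314312550154240, 11160044514841364048904192, 1671801585952084998488064, 197510109930977331511296, 17691624949143759224832, 1128040491604915519488, 45577393600198606848, 876488338465357824] := by rfl

end RankDerangement

theorem rank_derangements_thirteen :
    R 13 = 1309302175551177162931045000259922525308763433362019257020678406144 := by
  have h2 := (RankDerangement.R_eq_sum 13).trans
    ((RankDerangement.sum_PIn_eq 13
        (fun k => (-1 : ℤ) ^ k * ((4 * 13 - k).factorial : ℤ))).trans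
      (RankDerangement.conv 13 (fun k => (-1 : ℤ) ^ k * ((4 * 13 - k).factorial : ℤ))))
  have hval : ∑ k ∈ Finset.range (4 * 13 + 1), (RankDerangement.r 13 k : ℤ) *
      ((-1 : ℤ) ^ k * ((4 * 13 - k).factorial : ℤ))
      = 1309302175551177162931045000259922525308763433362019257020678406144 := by
    simp only [RankDerangement.r_eq_rl, RankDerangement.rl13]
    decide
  exact_mod_cast h2.trans hval
end

section
/- The probability that a uniformly random permutation of a 52-card deck is a rank-derangement equals 4610507544750288132457667562311567997623087869 / 284025438982318025793544200005777916187500000000. -/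
set_option maxHeartbeats 4000000
set_option synthInstance.maxSize 512
set_option synthInstance.maxHeartbeats 1000000
set_option maxRecDepth 4000


abbrev CD := Fin 13 × Fin 4

open Finset Equiv

namespace Frus

lemma card_CD : Fintype.card CD = 52 := by simp

lemma fix_count (S : Finset CD) :
    (univ.filter fun τ : Perm CD => ∀ c ∈ S, τ c = c).card
      = Nat.factorial (52 - S.card) := by
  rw [← Fintype.card_subtype]
  have e : Perm {x : CD // x ∉ S} ≃ {τ : Perm CD // ∀ c ∈ S, τ c = c} :=
    (Equiv.Perm.subtypeEquivSubtypePerm (fun x => x ∉ S)).trans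
      (Equiv.subtypeEquivRight (by intro τ; simp [not_not]))
  rw [← Fintype.card_congr e, Fintype.card_perm, Fintype.card_subtype]
  congr 1
  rw [Finset.filter_not, Finset.filter_mem_eq_inter, Finset.univ_inter, Finset.card_sdiff_of_subset (Finset.subset_univ S)]
  simp

lemma fiber_count (S : Finset CD) (σ₀ : Perm CD) :
    ((univ.filter fun σ : Perm CD => ∀ c ∈ S, σ c = σ₀ c)).card
      = Nat.factorial (52 - S.card) := by
  rw [← fix_count S]
  apply Finset.card_bij' (fun σ _ => σ₀⁻¹ * σ) (fun τ _ => σ₀ * τ)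
  · intro σ hσ
    simp only [Finset.mem_filter, Finset.mem_univ, true_and] at hσ ⊢
    intro c hc
    simp [Equiv.Perm.mul_apply, hσ c hc]
  · intro τ hτ
    simp only [Finset.mem_filter, Finset.mem_univ, true_and] at hτ ⊢
    intro c hc
    simp [Equiv.Perm.mul_apply, hτ c hc]
  · intro σ _; simp [← mul_assoc]
  · intro τ _; simp [← mul_assoc]

def A (S : Finset CD) : Finset (Perm CD) :=
  univ.filter fun σ : Perm CD => ∀ c ∈ S, (σ c).1 = c.1

def rmap (S : Finset CD) (σ : Perm CD) : CD → CD := fun c => if c ∈ S then σ c else c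

lemma fc_eq (S : Finset CD) :
    (A S).card = ((A S).image (rmap S)).card * Nat.factorial (52 - S.card) := by
  rw [Finset.card_eq_sum_card_fiberwise (fun σ hσ => Finset.mem_image_of_mem (rmap S) hσ)]
  rw [Finset.sum_congr rfl (fun y hy => ?_), Finset.sum_const, smul_eq_mul]
  obtain ⟨σ₀, hσ₀A, hσ₀⟩ := Finset.mem_image.mp hy
  have : (A S).filter (fun σ => rmap S σ = y) = univ.filter fun σ : Perm CD => ∀ c ∈ S, σ c = σ₀ c := by
    ext σ
    simp only [Finset.mem_filter, Finset.mem_univ, true_and, A]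
    constructor
    · rintro ⟨hr, hy'⟩ c hc
      have h1 : rmap S σ c = rmap S σ₀ c := by rw [hy', hσ₀]
      simpa [rmap, hc] using h1
    · intro h
      have hA : ∀ c ∈ S, (σ c).1 = c.1 := by
        intro c hc
        rw [h c hc]
        exact (Finset.mem_filter.mp hσ₀A).2 c hc
      refine ⟨hA, ?_⟩
      rw [← hσ₀]
      funext c
      by_cases hc : c ∈ S
      · simp [rmap, hc, h c hc]
      · simp [rmap, hc]
  rw [this, fiber_count S σ₀]

def sg (g : Fin 13 → Finset (Fin 4)) : Finset CD := univ.filter fun c => c.2 ∈ g c.1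

lemma mem_sg {g : Fin 13 → Finset (Fin 4)} {c : CD} : c ∈ sg g ↔ c.2 ∈ g c.1 := by
  simp [sg]

def T' (S : Finset CD) : Finset (CD → CD) :=
  Finset.filter (fun y : CD → CD => (∀ c ∈ S, (y c).1 = c.1) ∧
    (∀ c ∈ S, ∀ c' ∈ S, y c = y c' → c = c') ∧ ∀ c, c ∉ S → y c = c) univ

lemma mem_T' {S : Finset CD} {y : CD → CD} : y ∈ T' S ↔ (∀ c ∈ S, (y c).1 = c.1) ∧
    (∀ c ∈ S, ∀ c' ∈ S, y c = y c' → c = c') ∧ ∀ c, c ∉ S → y c = c := by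
  rw [T', Finset.mem_filter]
  simp only [Finset.mem_univ, true_and]

lemma image_eq (S : Finset CD) : (A S).image (rmap S) = T' S := by
  ext y
  rw [mem_T', Finset.mem_image]
  constructor
  · rintro ⟨σ, hσ, rfl⟩
    have hσ' := (Finset.mem_filter.mp hσ).2
    refine ⟨fun c hc => by simpa [rmap, hc] using hσ' c hc, ?_, fun c hc => by simp [rmap, hc]⟩
    intro c hc c' hc' h
    simp only [rmap, hc, hc', if_pos] at h
    exact σ.injective h
  · rintro ⟨h1, h2, h3⟩
    have hinj : Function.Injective (fun x : {x : CD // x ∈ S} => (⟨y x.1, Finset.mem_image_of_mem y x.2⟩ : {z : CD // z ∈ S.image y})) := by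
      rintro ⟨x, hx⟩ ⟨x', hx'⟩ h
      simp only [Subtype.mk_eq_mk] at h ⊢
      exact h2 x hx x' hx' h
    have hsurj : Function.Surjective (fun x : {x : CD // x ∈ S} => (⟨y x.1, Finset.mem_image_of_mem y x.2⟩ : {z : CD // z ∈ S.image y})) := by
      rintro ⟨z, hz⟩
      obtain ⟨x, hx, rfl⟩ := Finset.mem_image.mp hz
      exact ⟨⟨x, hx⟩, rfl⟩
    let e : {x : CD // x ∈ S} ≃ {z : CD // z ∈ S.image y} := Equiv.ofBijective _ ⟨hinj, hsurj⟩
    refine ⟨e.extendSubtype, ?_, ?_⟩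
    · simp only [A, Finset.mem_filter, Finset.mem_univ, true_and]
      intro c hc
      rw [e.extendSubtype_apply_of_mem c hc]
      show (y c).1 = c.1
      exact h1 c hc

    · funext c
      by_cases hc : c ∈ S
      · simp only [rmap, hc, if_pos]
        rw [e.extendSubtype_apply_of_mem c hc]
        rfl
      · simp only [rmap, if_neg hc]
        exact (h3 c hc).symm

def B (g : Fin 13 → Finset (Fin 4)) (i : Fin 13) : Finset (Fin 4 → Fin 4) :=
  univ.filter (fun h => (∀ a ∈ g i, ∀ b ∈ g i, h a = h b → a = b) ∧ ∀ v, v ∉ g i → h v = v)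

lemma count_partial (t : Finset (Fin 4)) :
    ((Finset.univ : Finset (Fin 4 → Fin 4)).filter
      (fun h => (∀ a ∈ t, ∀ b ∈ t, h a = h b → a = b) ∧ ∀ v, v ∉ t → h v = v)).card
      = Nat.descFactorial 4 t.card := by revert t; decide

lemma T'_card (g : Fin 13 → Finset (Fin 4)) :
    (T' (sg g)).card = ∏ i, Nat.descFactorial 4 (g i).card := by
  have main : (T' (sg g)).card = (Fintype.piFinset (B g)).card := by
    refine Finset.card_bij' (fun y _ => fun i v => (y (i, v)).2)
      (fun h _ => fun c => (c.1, h c.1 c.2)) ?hi ?hj ?li ?ri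
    case hi =>
      rintro y hy
      obtain ⟨h1, h2, h3⟩ := mem_T'.mp hy
      rw [Fintype.mem_piFinset]
      intro i
      simp only [B, Finset.mem_filter, Finset.mem_univ, true_and]
      constructor
      · intro a ha b hb hab
        have hma : ((i, a) : CD) ∈ sg g := mem_sg.mpr ha
        have hmb : ((i, b) : CD) ∈ sg g := mem_sg.mpr hb
        have hy2 : y (i, a) = y (i, b) := Prod.ext (by rw [h1 _ hma, h1 _ hmb]) hab
        have := h2 _ hma _ hmb hy2
        exact congrArg Prod.snd this
      · intro v hv
        have : ((i, v) : CD) ∉ sg g := fun hmem => hv (mem_sg.mp hmem)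
        rw [h3 _ this]
    case hj =>
      rintro h hh
      rw [Fintype.mem_piFinset] at hh
      rw [mem_T']
      refine ⟨fun c _ => rfl, ?_, ?_⟩
      · rintro c hc c' hc' hcc
        replace hcc : (c.1, h c.1 c.2) = (c'.1, h c'.1 c'.2) := hcc
        injection hcc with he1 he2
        rw [← he1] at he2
        have hb := (Finset.mem_filter.mp (hh c.1)).2
        have hc2 : c'.2 ∈ g c.1 := by rw [he1]; exact mem_sg.mp hc'
        have := hb.1 c.2 (mem_sg.mp hc) c'.2 hc2 he2
        exact Prod.ext he1 this
      · intro c hc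
        have hb := (Finset.mem_filter.mp (hh c.1)).2
        have : h c.1 c.2 = c.2 := hb.2 c.2 (fun hm => hc (mem_sg.mpr hm))
        exact Prod.ext rfl this
    case li =>
      intro y hy
      obtain ⟨h1, h2, h3⟩ := mem_T'.mp hy
      funext c
      show (c.1, (y (c.1, c.2)).2) = y c
      rw [Prod.mk.eta]
      by_cases hc : c ∈ sg g
      · exact Prod.ext (h1 c hc).symm rfl
      · rw [h3 c hc]
    case ri =>
      intro h _; rfl
  rw [main, Fintype.card_piFinset]
  exact Finset.prod_congr rfl (fun i _ => count_partial (g i))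

lemma sg_card (g : Fin 13 → Finset (Fin 4)) : (sg g).card = ∑ i, (g i).card := by
  rw [sg, Finset.card_filter, Fintype.sum_prod_type]
  refine Finset.sum_congr rfl (fun i _ => ?_)
  dsimp only
  rw [Finset.sum_ite_mem, Finset.univ_inter, Finset.sum_const, smul_eq_mul, mul_one]

lemma fc_sg (g : Fin 13 → Finset (Fin 4)) :
    ((A (sg g)).card : ℤ)
      = (∏ i, (Nat.descFactorial 4 (g i).card : ℤ))
        * (Nat.factorial (52 - ∑ i, (g i).card) : ℤ) := by
  rw [fc_eq (sg g), image_eq, T'_card, sg_card]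
  push_cast
  ring_nf

lemma IE : ((R 13 : ℕ) : ℤ)
    = ∑ S ∈ (univ : Finset CD).powerset, (-1 : ℤ)^S.card * ((A S).card : ℤ) := by
  rw [R, Finset.card_filter]
  push_cast
  have step1 : ∀ σ : Perm CD, ((if (∀ c : CD, (σ c).1 ≠ c.1) then 1 else 0 : ℤ))
      = ∑ S ∈ (univ.filter fun c : CD => (σ c).1 = c.1).powerset, (-1 : ℤ)^S.card := by
    intro σ
    rw [Finset.sum_powerset_neg_one_pow_card]
    have hiff : (univ.filter fun c : CD => (σ c).1 = c.1) = ∅ ↔ (∀ c : CD, (σ c).1 ≠ c.1) := by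
      simp [Finset.filter_eq_empty_iff]
    simp only [hiff]
  rw [Finset.sum_congr rfl (fun σ _ => step1 σ)]
  have step2 : ∀ σ : Perm CD,
      (univ.filter fun c : CD => (σ c).1 = c.1).powerset
        = (univ : Finset CD).powerset.filter (fun S => ∀ c ∈ S, (σ c).1 = c.1) := by
    intro σ
    ext S
    rw [Finset.mem_powerset, Finset.mem_filter, Finset.mem_powerset]
    constructor
    · intro h
      exact ⟨Finset.subset_univ S, fun c hc => (Finset.mem_filter.mp (h hc)).2⟩
    · rintro ⟨-, h2⟩ c hc
      exact Finset.mem_filter.mpr ⟨Finset.mem_univ c, h2 c hc⟩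
  rw [Finset.sum_congr rfl (fun σ _ => by rw [step2 σ, Finset.sum_filter])]
  rw [Finset.sum_comm]
  refine Finset.sum_congr rfl (fun S _ => ?_)
  rw [← Finset.sum_filter]
  rw [Finset.sum_const, A]
  push_cast
  ring

lemma reindex :
    (∑ S ∈ (univ : Finset CD).powerset, (-1 : ℤ)^S.card * ((A S).card : ℤ))
      = ∑ g ∈ Fintype.piFinset (fun _ : Fin 13 => (univ : Finset (Fin 4)).powerset),
          (-1 : ℤ)^(∑ i, (g i).card)
            * ((∏ i, (Nat.descFactorial 4 (g i).card : ℤ))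
              * (Nat.factorial (52 - ∑ i, (g i).card) : ℤ)) := by
  symm
  refine Finset.sum_nbij' (fun g => sg g)
    (fun S => fun i => (univ : Finset (Fin 4)).filter (fun v => (i, v) ∈ S)) ?_ ?_ ?_ ?_ ?_
  · intro g _; exact Finset.mem_powerset.mpr (Finset.subset_univ _)
  · intro S _
    rw [Fintype.mem_piFinset]
    intro i
    exact Finset.mem_powerset.mpr (Finset.subset_univ _)
  · intro g _
    funext i
    ext v
    simp [mem_sg]
  · intro S _
    ext c
    rw [mem_sg]
    simp
  · intro g _
    rw [sg_card, fc_sg]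

open Polynomial in
noncomputable def pbar : Polynomial ℤ :=
  ∑ T ∈ (univ : Finset (Fin 4)).powerset,
    C ((-1)^T.card * (Nat.descFactorial 4 T.card : ℤ)) * X ^ T.card

noncomputable def ell : Polynomial ℤ →ₗ[ℤ] ℤ :=
  ∑ k ∈ Finset.range 53, ((Nat.factorial (52 - k) : ℤ)) • Polynomial.lcoeff ℤ k

open Polynomial in
lemma ell_CX (c : ℤ) (m : ℕ) :
    ell (C c * X ^ m) = if m < 53 then c * (Nat.factorial (52 - m) : ℤ) else 0 := by
  simp only [ell, LinearMap.sum_apply, LinearMap.smul_apply, lcoeff_apply, coeff_C_mul,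
    coeff_X_pow, smul_eq_mul, mul_ite, mul_one, mul_zero]
  rw [Finset.sum_ite_eq' (Finset.range 53) m (fun k => (Nat.factorial (52-k):ℤ) * c)]
  simp [Finset.mem_range, mul_comm]

open Polynomial in
lemma alg :
    (∑ g ∈ Fintype.piFinset (fun _ : Fin 13 => (univ : Finset (Fin 4)).powerset),
      (-1 : ℤ)^(∑ i, (g i).card)
        * ((∏ i, (Nat.descFactorial 4 (g i).card : ℤ))
          * (Nat.factorial (52 - ∑ i, (g i).card) : ℤ)))
    = ell (pbar ^ 13) := by
  have hp : pbar ^ 13 = ∏ _i : Fin 13, pbar := by rw [Finset.prod_const]; simp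
  rw [hp, pbar, Finset.prod_univ_sum, map_sum]
  refine Finset.sum_congr rfl (fun g hg => ?_)
  have h1 : (∏ i : Fin 13, C ((-1 : ℤ)^(g i).card * (Nat.descFactorial 4 (g i).card : ℤ)) * X ^ (g i).card)
      = C ((-1 : ℤ)^(∑ i, (g i).card) * ∏ i, (Nat.descFactorial 4 (g i).card : ℤ))
        * X ^ (∑ i, (g i).card) := by
    rw [Finset.prod_mul_distrib, ← map_prod, Finset.prod_pow_eq_pow_sum]
    congr 2
    rw [Finset.prod_mul_distrib, Finset.prod_pow_eq_pow_sum]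
  rw [h1, ell_CX]
  have hle : (∑ i, (g i).card) < 53 := by
    calc ∑ i, (g i).card ≤ ∑ _i : Fin 13, 4 :=
      Finset.sum_le_sum (fun i _ => by simpa using Finset.card_le_univ (g i))
    _ < 53 := by norm_num
  rw [if_pos hle]; ring

open Polynomial in
lemma pbar_explicit : pbar = C 24 * X^4 - C 96 * X^3 + C 72 * X^2 - C 16 * X + C 1 := by
  rw [pbar, Finset.sum_powerset_apply_card
    (f := fun j => C ((-1 : ℤ)^j * (Nat.descFactorial 4 j : ℤ)) * X ^ j)]
  simp only [Finset.card_univ, Fintype.card_fin]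
  norm_num [Finset.sum_range_succ, Nat.descFactorial, Nat.choose]
  ring

open Polynomial in
lemma pexp : pbar ^ 13 = C (1) * X ^ 0 + C (-208) * X ^ 1 + C (20904) * X ^ 2 + C (-1352416) * X ^ 3 + C (63317176) * X ^ 4 + C (-2286355968) * X ^ 5 + C (66274500864) * X ^ 6 + C (-1584864353280) * X ^ 7 + C (31889733303168) * X ^ 8 + C (-547978858645504) * X ^ 9 + C (8134161165644800) * X ^ 10 + C (-105252850794983424) * X ^ 11 + C (1195874963294123008) * X ^ 12 + C (-12001392087581949952) * X ^ 13 + C (106897204313740099584) * X ^ 14 + C (-848414962333166272512) * X ^ 15 + C (6019588771736064405504) * X ^ 16 + C (-38281822498322914148352) * X ^ 17 + C (218683644405946996064256) * X ^ 18 + C (-1124030206367503712649216) * X ^ 19 + C (5205350659089153382318080) * X ^ 20 + C (-21739757533915099252654080) * X ^ 21 + C (81936653202101883358937088) * X ^ 22 + C (-278792442466454053784125440) * X ^ 23 + C (856457318848268962838347776) * X ^ 24 + C (-2375107083460873825743273984) * X ^ 25 + C (5943418300909605336033263616) * X ^ 26 + C (-13411658611783123462206259200) * X ^ 27 + C (27266846764215411046147424256)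 * X ^ 28 + C (-49888716764060350279204208640) * X ^ 29 + C (82032877163176103200828686336) * X ^ 30 + C (-121028385182593948745868509184) * X ^ 31 + C (159913383565757439686505136128) * X ^ 32 + C (-188820916758223736558378287104) * X ^ 33 + C (198761291157362514223920316416) * X ^ 34 + C (-186016114662793760931122774016) * X ^ 35 + C (154308224898784201844862222336) * X ^ 36 + C (-113078073865975333400686362624) * X ^ 37 + C (72925355758796236529483120640) * X ^ 38 + C (-41214531997403741694399086592) * X ^ 39 + C (20314896422012315375385968640) * X ^ 40 + C (-8685452212593567389102112768) * X ^ 41 + C (3200508341076271076179181568) * X ^ 42 + C (-1008829460845176117163720704) * X ^ 43 + C (269536240818933486512504832) * X ^ 44 + C (-60349919423314312550154240) * X ^ 45 + C (11160044514841364048904192) * X ^ 46 + C (-1671801585952084998488064) * X ^ 47 + C (197510109930977331511296) * X ^ 48 + C (-17691624949143759224832) * X ^ 49 + C (1128040491604915519488) * X ^ 50 + C (-45577393600198606848) * X ^ 51 + C (876488338465357824) * X ^ 52 := by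
  rw [pbar_explicit]
  simp only [map_ofNat, map_neg, map_one, Polynomial.C_1]
  ring

lemma Rval : ((R 13 : ℕ) : ℤ) = 1309302175551177162931045000259922525308763433362019257020678406144 := by
  rw [IE, reindex, alg, pexp]
  simp only [map_add, ell_CX]
  norm_num [Nat.factorial]

end Frus

theorem frustration_solitaire_probability :
    (R 13 : ℚ) / (Nat.factorial 52 : ℚ) =
      4610507544750288132457667562311567997623087869 /
        284025438982318025793544200005777916187500000000 := by
  have h : ((R 13 : ℕ) : ℚ) = ((1309302175551177162931045000259922525308763433362019257020678406144 : ℤ) : ℚ) := by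
    rw [← Frus.Rval]; push_cast; ring
  rw [h]
  rw [div_eq_div_iff (by positivity) (by norm_num)]
  norm_num [Nat.factorial]
end

section
/- The ratio R_n/(4n)! of rank-derangements to all permutations of a 4n-card deck tends to e^{-4} as n tends to infinity. -/
open Finset Filter


lemma card_extensions {α : Type*} [Fintype α] [DecidableEq α] (S : Finset α)
    (f : {x // x ∈ S} → α) (hf : Function.Injective f) :
    (Finset.univ.filter fun σ : Equiv.Perm α => ∀ x : {x // x ∈ S}, σ x = f x).card
      = (Fintype.card α - S.card).factorial := by
  classical
  rw [← Fintype.card_subtype]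
  let s : Set α := ↑S
  let e₀ : s ≃ Set.range f := Equiv.ofInjective f hf
  have key : Fintype.card {σ : α ≃ α // ∀ x : s, σ x = e₀ x}
      = Fintype.card (↥sᶜ ≃ ↥(Set.range f)ᶜ) :=
    Fintype.card_congr (Equiv.Set.compl (α := α) (β := α) (s := s) (t := Set.range f) e₀)
  have h2 : Fintype.card {σ : Equiv.Perm α // ∀ x : {x // x ∈ S}, σ x = f x}
      = Fintype.card {σ : α ≃ α // ∀ x : s, σ x = e₀ x} := by
    apply Fintype.card_congr
    apply Equiv.subtypeEquivRight
    intro σ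
    simp only [e₀, Equiv.ofInjective_apply, s]
    exact ⟨fun h x => h ⟨x.1, x.2⟩, fun h x => h ⟨x.1, x.2⟩⟩
  have hs : Fintype.card ↥sᶜ = Fintype.card α - S.card := by
    rw [Fintype.card_compl_set]
    congr 1
    simp [s]
  have hcards : Fintype.card ↥sᶜ = Fintype.card ↥(Set.range f)ᶜ := by
    rw [Fintype.card_compl_set, Fintype.card_compl_set,
      Set.card_range_of_injective hf]
    rfl
  rw [h2, key, Fintype.card_equiv (Fintype.equivOfCardEq hcards), hs]


abbrev Deck (n : ℕ) := Fin n × Fin 4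

def Inj (n : ℕ) (S : Finset (Deck n)) : Finset ({x // x ∈ S} → Deck n) :=
  Finset.univ.filter fun f => Function.Injective f ∧ ∀ x, (f x).1 = (x : Deck n).1

def r (n k : ℕ) : ℕ := ∑ S ∈ powersetCard k (univ : Finset (Deck n)), (Inj n S).card

lemma inj_card_le (n : ℕ) (S : Finset (Deck n)) : (Inj n S).card ≤ 4 ^ S.card := by
  classical
  have : (Inj n S).card ≤ (univ : Finset ({x // x ∈ S} → Fin 4)).card := by
    apply Finset.card_le_card_of_injOn (fun f => fun x => (f x).2)
    · intro f _; exact Finset.mem_univ _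
    · intro f hf g hg hfg
      have hf2 := (Finset.mem_filter.mp hf).2.2
      have hg2 := (Finset.mem_filter.mp hg).2.2
      funext x
      exact Prod.ext ((hf2 x).trans (hg2 x).symm) (congrFun hfg x)
  simpa [Finset.card_univ] using this

lemma r_le (n k : ℕ) : r n k ≤ (4 * n).choose k * 4 ^ k := by
  classical
  have hcard : (univ : Finset (Deck n)).card = 4 * n := by
    simp [Finset.card_univ, mul_comm]
  calc r n k ≤ ∑ _S ∈ powersetCard k (univ : Finset (Deck n)), 4 ^ k := by
        refine Finset.sum_le_sum fun S hS => ?_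
        have := inj_card_le n S
        rwa [(Finset.mem_powersetCard.mp hS).2] at this
    _ = (4 * n).choose k * 4 ^ k := by
        rw [Finset.sum_const, Finset.card_powersetCard, hcard, smul_eq_mul]

lemma le_r (n k : ℕ) : n.choose k * 16 ^ k ≤ r n k := by
  classical
  set D := (powersetCard k (univ : Finset (Deck n))).filter
    (fun S : Finset (Deck n) => Set.InjOn Prod.fst (S : Set (Deck n))) with hD
  -- part (a)
  have ha : ∀ S ∈ D, 4 ^ k ≤ (Inj n S).card := by
    intro S hS
    obtain ⟨hS1, hS2⟩ := Finset.mem_filter.mp hS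
    have hSk : S.card = k := (Finset.mem_powersetCard.mp hS1).2
    have : (univ : Finset ({x // x ∈ S} → Fin 4)).card ≤ (Inj n S).card := by
      apply Finset.card_le_card_of_injOn
        (fun g : {x // x ∈ S} → Fin 4 => fun x : {x // x ∈ S} => ((x : Deck n).1, g x))
      · intro g _
        refine Finset.mem_filter.mpr ⟨Finset.mem_univ _, ?_, fun x => rfl⟩
        intro x y hxy
        simp only at hxy
        have h1 := congrArg Prod.fst hxy
        have h2 : (x : Deck n) = (y : Deck n) := hS2 x.2 y.2 h1
        exact Subtype.ext h2
      · intro g _ h _ hgh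
        funext x
        exact congrArg Prod.snd (congrFun hgh x)
    calc 4 ^ k = (univ : Finset ({x // x ∈ S} → Fin 4)).card := by
          simp [Finset.card_univ, hSk]
      _ ≤ _ := this
  -- part (b): card of D
  have hb : n.choose k * 4 ^ k ≤ D.card := by
    have := Finset.card_le_card_of_injOn
      (f := fun p : (T : Finset (Fin n)) × ({t // t ∈ T} → Fin 4) =>
        p.1.attach.image (fun t : {x // x ∈ p.1} => ((t : Fin n), p.2 t)))
      (s := (powersetCard k (univ : Finset (Fin n))).sigma
        (fun T => (univ : Finset ({t // t ∈ T} → Fin 4))))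
      (t := D) ?_ ?_
    · calc n.choose k * 4 ^ k
          = ∑ T ∈ powersetCard k (univ : Finset (Fin n)), 4 ^ k := by
            rw [Finset.sum_const, Finset.card_powersetCard, smul_eq_mul]
            simp
        _ = ((powersetCard k (univ : Finset (Fin n))).sigma
            (fun T => (univ : Finset ({t // t ∈ T} → Fin 4)))).card := by
            rw [Finset.card_sigma]
            refine (Finset.sum_congr rfl fun T hT => ?_).symm
            have hTk : T.card = k := (Finset.mem_powersetCard.mp hT).2
            simp [Finset.card_univ, hTk]
        _ ≤ D.card := this
    · rintro ⟨T, g⟩ hTg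
      have hTk : T.card = k := (Finset.mem_powersetCard.mp (Finset.mem_sigma.mp hTg).1).2
      have hinj : Function.Injective (fun t : {t // t ∈ T} => ((t : Fin n), g t)) := by
        intro x y hxy
        exact Subtype.ext (congrArg Prod.fst hxy)
      refine Finset.mem_filter.mpr ⟨Finset.mem_powersetCard.mpr ⟨Finset.subset_univ _, ?_⟩, ?_⟩
      · rw [Finset.card_image_of_injective _ hinj, Finset.card_attach, hTk]
      · intro a ha b hb hab
        simp only [Finset.coe_image, Set.mem_image] at ha hb
        obtain ⟨x, -, rfl⟩ := ha
        obtain ⟨y, -, rfl⟩ := hb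
        have : (x : Fin n) = (y : Fin n) := hab
        rw [Subtype.ext this]
    · rintro ⟨T, g⟩ hTg ⟨T', g'⟩ hTg' heq
      simp only at heq
      have hTT' : T = T' := by
        ext t
        constructor
        · intro ht
          have hmem : ((t : Fin n), g ⟨t, ht⟩) ∈ T'.attach.image
              (fun s : {x // x ∈ T'} => ((s : Fin n), g' s)) := by
            rw [← heq]
            exact Finset.mem_image.mpr ⟨⟨t, ht⟩, Finset.mem_attach _ _, rfl⟩
          obtain ⟨t', -, ht'⟩ := Finset.mem_image.mp hmem
          have h1 : (t' : Fin n) = t := congrArg Prod.fst ht'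
          exact h1 ▸ t'.2
        · intro ht
          have hmem : ((t : Fin n), g' ⟨t, ht⟩) ∈ T.attach.image
              (fun s : {x // x ∈ T} => ((s : Fin n), g s)) := by
            rw [heq]
            exact Finset.mem_image.mpr ⟨⟨t, ht⟩, Finset.mem_attach _ _, rfl⟩
          obtain ⟨t', -, ht'⟩ := Finset.mem_image.mp hmem
          have h1 : (t' : Fin n) = t := congrArg Prod.fst ht'
          exact h1 ▸ t'.2
      subst hTT'
      have hgg' : g = g' := by
        funext t
        have hmem : ((t : Fin n), g t) ∈ T.attach.image
            (fun s : {x // x ∈ T} => ((s : Fin n), g' s)) := by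
          rw [← heq]
          exact Finset.mem_image.mpr ⟨t, Finset.mem_attach _ _, rfl⟩
        obtain ⟨t', -, ht'⟩ := Finset.mem_image.mp hmem
        have h1 : (t' : Fin n) = (t : Fin n) := congrArg Prod.fst ht'
        have h2 : t' = t := Subtype.ext h1
        have h3 : g' t' = g t := congrArg Prod.snd ht'
        rw [h2] at h3
        exact h3.symm
      rw [hgg']
  -- combine
  calc n.choose k * 16 ^ k = (n.choose k * 4 ^ k) * 4 ^ k := by
        rw [show (16:ℕ) = 4*4 from rfl, mul_pow, mul_assoc]
    _ ≤ D.card * 4 ^ k := Nat.mul_le_mul_right _ hb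
    _ = ∑ _S ∈ D, 4 ^ k := by rw [Finset.sum_const, smul_eq_mul]
    _ ≤ ∑ S ∈ D, (Inj n S).card := Finset.sum_le_sum ha
    _ ≤ r n k := Finset.sum_le_sum_of_subset (Finset.filter_subset _ _)

lemma N_eq (n : ℕ) (S : Finset (Deck n)) :
    (univ.filter fun σ : Equiv.Perm (Deck n) => ∀ c ∈ S, (σ c).1 = c.1).card
      = (Inj n S).card * (4 * n - S.card).factorial := by
  classical
  have hcard : Fintype.card (Deck n) = 4 * n := by simp [Fintype.card_prod, mul_comm]
  rw [card_eq_sum_card_fiberwise (f := fun σ : Equiv.Perm (Deck n) => fun x : {x // x ∈ S} => σ x)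
    (t := Inj n S) ?_]
  · rw [Finset.sum_congr rfl (fun f hf => ?_), Finset.sum_const, smul_eq_mul]
    have hfinj : Function.Injective f := ((Finset.mem_filter.mp hf).2).1
    have hrank : ∀ x : {x // x ∈ S}, (f x).1 = (x : Deck n).1 := ((Finset.mem_filter.mp hf).2).2
    have : (Finset.filter (fun σ : Equiv.Perm (Deck n) =>
        (fun x : {x // x ∈ S} => σ x) = f)
        (univ.filter fun σ : Equiv.Perm (Deck n) => ∀ c ∈ S, (σ c).1 = c.1))
        = univ.filter fun σ : Equiv.Perm (Deck n) => ∀ x : {x // x ∈ S}, σ x = f x := by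
      ext σ
      simp only [Finset.mem_filter, Finset.mem_univ, true_and]
      constructor
      · rintro ⟨-, h⟩ x
        exact congrFun h x
      · intro h
        constructor
        · intro c hc
          rw [h ⟨c, hc⟩, hrank ⟨c, hc⟩]
        · funext x; exact h x
    rw [this, card_extensions S f hfinj, hcard]
  · intro σ hσ
    refine Finset.mem_filter.mpr ⟨Finset.mem_univ _, ?_⟩
    refine ⟨fun x y hxy => Subtype.ext (σ.injective hxy), fun x => ?_⟩
    exact (Finset.mem_filter.mp hσ).2 x.1 x.2


lemma R_eq (n : ℕ) : (R n : ℤ) =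
    ∑ k ∈ range (4 * n + 1), (-1 : ℤ) ^ k * r n k * (4 * n - k).factorial := by
  classical
  have hcard : (univ : Finset (Deck n)).card = 4 * n := by
    simp [Finset.card_univ, mul_comm]
  have step2 : (R n : ℤ) = ∑ σ : Equiv.Perm (Deck n),
      ∑ S ∈ (univ.filter fun c : Deck n => (σ c).1 = c.1).powerset, (-1 : ℤ) ^ S.card := by
    rw [R, Finset.card_filter]
    push_cast
    refine Finset.sum_congr rfl fun σ _ => ?_
    rw [Finset.sum_powerset_neg_one_pow_card]
    have : (univ.filter fun c : Deck n => (σ c).1 = c.1) = ∅ ↔ ∀ c, (σ c).1 ≠ c.1 := by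
      simp only [Finset.filter_eq_empty_iff, Finset.mem_univ, forall_const]
    by_cases h : ∀ c, (σ c).1 ≠ c.1
    · rw [if_pos h, if_pos (this.mpr h)]
    · rw [if_neg h, if_neg (fun he => h (this.mp he))]
  have step3 : (R n : ℤ) = ∑ S ∈ (univ : Finset (Deck n)).powerset,
      ∑ σ ∈ (univ.filter fun σ : Equiv.Perm (Deck n) => ∀ c ∈ S, (σ c).1 = c.1),
        (-1 : ℤ) ^ S.card := by
    rw [step2]
    apply Finset.sum_comm'
    intro σ S
    simp only [Finset.mem_univ, true_and, Finset.mem_powerset, Finset.mem_filter, and_true]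
    constructor
    · intro h
      exact ⟨fun c hc => (Finset.mem_filter.mp (h hc)).2, Finset.subset_univ S⟩
    · rintro ⟨h, -⟩ c hc
      exact Finset.mem_filter.mpr ⟨Finset.mem_univ _, h c hc⟩
  rw [step3, Finset.powerset_card_disjiUnion]
  erw [Finset.sum_disjiUnion]
  rw [hcard]
  refine Finset.sum_congr rfl fun k _ => ?_
  have inner : ∀ S ∈ powersetCard k (univ : Finset (Deck n)),
      (∑ _σ ∈ (univ.filter fun σ : Equiv.Perm (Deck n) => ∀ c ∈ S, (σ c).1 = c.1),
        (-1 : ℤ) ^ S.card)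
      = (-1 : ℤ) ^ k * ((Inj n S).card : ℤ) * ((4 * n - k).factorial : ℤ) := by
    intro S hS
    have hSk : S.card = k := (Finset.mem_powersetCard.mp hS).2
    rw [Finset.sum_const, N_eq, hSk, nsmul_eq_mul]
    push_cast
    ring
  have hr : ((r n k : ℤ)) = ∑ S ∈ powersetCard k (univ : Finset (Deck n)),
      ((Inj n S).card : ℤ) := by rw [r]; push_cast; rfl
  rw [Finset.sum_congr rfl inner, hr, Finset.mul_sum, Finset.sum_mul]


lemma r_zero (n k : ℕ) (h : 4 * n < k) : r n k = 0 := by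
  classical
  rw [r, Finset.powersetCard_eq_empty.mpr (by simp [Finset.card_univ, mul_comm]; omega),
    Finset.sum_empty]

noncomputable def a (n k : ℕ) : ℝ :=
  (r n k : ℝ) * ((4 * n - k).factorial : ℝ) / ((4 * n).factorial : ℝ)

lemma a_nonneg (n k : ℕ) : 0 ≤ a n k := by unfold a; positivity

lemma a_le (n k : ℕ) : a n k ≤ 4 ^ k / k.factorial := by
  have hnat : r n k * (4 * n - k).factorial * k.factorial ≤ 4 ^ k * (4 * n).factorial := by
    rcases le_or_gt k (4 * n) with hk | hk
    · calc r n k * (4 * n - k).factorial * k.factorial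
          ≤ ((4 * n).choose k * 4 ^ k) * (4 * n - k).factorial * k.factorial :=
            Nat.mul_le_mul_right _ (Nat.mul_le_mul_right _ (r_le n k))
        _ = 4 ^ k * ((4 * n).choose k * k.factorial * (4 * n - k).factorial) := by ring
        _ = 4 ^ k * (4 * n).factorial := by rw [Nat.choose_mul_factorial_mul_factorial hk]
    · rw [r_zero n k hk]; simp
  rw [a, div_le_div_iff₀ (by positivity) (by positivity)]
  calc (r n k : ℝ) * ((4 * n - k).factorial : ℝ) * (k.factorial : ℝ)
      = ((r n k * (4 * n - k).factorial * k.factorial : ℕ) : ℝ) := by push_cast; ring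
    _ ≤ ((4 ^ k * (4 * n).factorial : ℕ) : ℝ) := Nat.cast_le.mpr hnat
    _ = 4 ^ k * ((4 * n).factorial : ℝ) := by push_cast; ring

lemma factor_tendsto (i : ℕ) :
    Tendsto (fun n : ℕ => ((n : ℝ) - i) / (4 * (n : ℝ) - i)) atTop (nhds (1 / 4)) := by
  have h1 : Tendsto (fun n : ℕ => (1 : ℝ) - i / n) atTop (nhds 1) := by
    have := (tendsto_const_nhds (x := (1:ℝ)) (f := atTop (α := ℕ))).sub
      (tendsto_const_div_atTop_nhds_zero_nat (i : ℝ))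
    simpa using this
  have h2 : Tendsto (fun n : ℕ => (4 : ℝ) - i / n) atTop (nhds 4) := by
    have := (tendsto_const_nhds (x := (4:ℝ)) (f := atTop (α := ℕ))).sub
      (tendsto_const_div_atTop_nhds_zero_nat (i : ℝ))
    simpa using this
  have h3 := h1.div h2 (by norm_num)
  refine h3.congr' ?_
  filter_upwards [eventually_ge_atTop 1] with n hn
  simp only [Pi.div_apply]
  have hn0 : (n : ℝ) ≠ 0 := by positivity
  rw [show (1 : ℝ) - i / n = ((n : ℝ) - i) / n by field_simp,
    show (4 : ℝ) - (i : ℝ) / n = (4 * (n : ℝ) - i) / n by field_simp,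
    div_div_div_cancel_right₀ hn0]

lemma a_tendsto (k : ℕ) :
    Tendsto (fun n : ℕ => a n k) atTop (nhds (4 ^ k / k.factorial)) := by
  set L : ℕ → ℝ := fun n =>
    (n.choose k : ℝ) * 16 ^ k * ((4 * n - k).factorial : ℝ) / ((4 * n).factorial : ℝ) with hL
  have hprod : Tendsto (fun n : ℕ => ∏ i ∈ range k, (((n : ℝ) - i) / (4 * (n : ℝ) - i)))
      atTop (nhds (∏ _i ∈ range k, (1 / 4 : ℝ))) :=
    tendsto_finset_prod _ (fun i _ => factor_tendsto i)
  have hLT : Tendsto L atTop (nhds (4 ^ k / k.factorial)) := by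
    have hconstmul := hprod.const_mul ((16 : ℝ) ^ k / k.factorial)
    have hval : (16 : ℝ) ^ k / k.factorial * ∏ _i ∈ range k, (1 / 4 : ℝ)
        = 4 ^ k / k.factorial := by
      rw [Finset.prod_const, Finset.card_range]
      rw [div_mul_eq_mul_div, ← mul_pow]
      norm_num
    rw [hval] at hconstmul
    refine hconstmul.congr' ?_
    filter_upwards [eventually_ge_atTop k] with n hn
    have h4 : k ≤ 4 * n := le_trans hn (by omega)
    have hfact : ((4 * n).factorial : ℝ)
        = ((4 * n).descFactorial k : ℝ) * ((4 * n - k).factorial : ℝ) := by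
      rw [← Nat.cast_mul]
      congr 1
      rw [Nat.descFactorial_eq_factorial_mul_choose]
      rw [show k.factorial * (4*n).choose k * (4*n-k).factorial
        = (4*n).choose k * k.factorial * (4*n-k).factorial by ring]
      exact (Nat.choose_mul_factorial_mul_factorial h4).symm
    have hchoose : (n.choose k : ℝ) = (n.descFactorial k : ℝ) / (k.factorial : ℝ) := by
      rw [Nat.descFactorial_eq_factorial_mul_choose]
      push_cast
      field_simp
    have hdn : (n.descFactorial k : ℝ) = ∏ i ∈ range k, ((n : ℝ) - i) := by
      rw [Nat.descFactorial_eq_prod_range, Nat.cast_prod]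
      refine Finset.prod_congr rfl fun i hi => ?_
      have : i ≤ n := le_trans (Nat.le_of_lt_succ (Nat.lt_succ_of_lt (mem_range.mp hi))) hn
      push_cast [Nat.cast_sub this]
      ring
    have hd4 : ((4 * n).descFactorial k : ℝ) = ∏ i ∈ range k, (4 * (n : ℝ) - i) := by
      rw [Nat.descFactorial_eq_prod_range, Nat.cast_prod]
      refine Finset.prod_congr rfl fun i hi => ?_
      have : i ≤ 4 * n := le_trans (le_of_lt (mem_range.mp hi)) h4
      push_cast [Nat.cast_sub this]
      ring
    have hd4ne : ((4 * n).descFactorial k : ℝ) ≠ 0 := by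
      rw [Nat.cast_ne_zero]
      intro h
      exact absurd (Nat.descFactorial_eq_zero_iff_lt.mp h) (not_lt.mpr h4)
    have hprodne : (∏ i ∈ range k, (4 * (n : ℝ) - i)) ≠ 0 := hd4 ▸ hd4ne
    have hfactne : ((4 * n - k).factorial : ℝ) ≠ 0 := by positivity
    have hkne : (k.factorial : ℝ) ≠ 0 := by positivity
    -- goal : (16^k / k!) * ∏ (n-i)/(4n-i) = L n
    rw [hL]
    simp only
    rw [hfact, hchoose, hdn, hd4, Finset.prod_div_distrib]
    field_simp
  -- squeeze
  refine tendsto_of_tendsto_of_tendsto_of_le_of_le' hLT tendsto_const_nhds ?_ ?_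
  · refine Eventually.of_forall fun n => ?_
    rw [hL]
    simp only [a]
    have hle : ((n.choose k : ℝ) * 16 ^ k) ≤ (r n k : ℝ) := by exact_mod_cast le_r n k
    gcongr
  · exact Eventually.of_forall fun n => a_le n k

theorem rank_derangements_ratio_tendsto :
    Filter.Tendsto (fun n : ℕ => (R n : ℝ) / (Nat.factorial (4 * n) : ℝ))
      Filter.atTop (nhds (Real.exp (-4))) := by
  have hrepr : ∀ n : ℕ, (R n : ℝ) / ((4 * n).factorial : ℝ)
      = ∑' k : ℕ, (-1 : ℝ) ^ k * a n k := by
    intro n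
    have hz : ∀ k ∉ Finset.range (4 * n + 1), (-1 : ℝ) ^ k * a n k = 0 := by
      intro k hk
      have hlt : 4 * n < k := by
        have := Finset.mem_range.not.mp hk
        omega
      rw [a, r_zero n k hlt]
      simp
    rw [tsum_eq_sum hz]
    have hR : (R n : ℝ)
        = ∑ k ∈ Finset.range (4*n+1), (-1:ℝ)^k * r n k * ((4*n-k).factorial : ℝ) := by
      exact_mod_cast congrArg (Int.cast : ℤ → ℝ) (R_eq n)
    rw [hR, Finset.sum_div]
    refine Finset.sum_congr rfl fun k _ => ?_
    rw [a]
    ring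
  simp only [hrepr]
  have hlim : Tendsto (fun n : ℕ => ∑' k : ℕ, (-1:ℝ)^k * a n k) atTop
      (nhds (∑' k : ℕ, (-1:ℝ)^k * (4^k / k.factorial))) := by
    refine tendsto_tsum_of_dominated_convergence
      (f := fun (n : ℕ) (k : ℕ) => (-1:ℝ)^k * a n k)
      (g := fun k : ℕ => (-1:ℝ)^k * (4^k / k.factorial))
      (bound := fun k : ℕ => (4:ℝ)^k / k.factorial)
      (Real.summable_pow_div_factorial 4) ?_ ?_
    · intro k
      exact (a_tendsto k).const_mul _
    · refine Eventually.of_forall fun n => fun k => ?_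
      rw [norm_mul, norm_pow, norm_neg, norm_one, one_pow, one_mul,
        Real.norm_of_nonneg (a_nonneg n k)]
      exact a_le n k
  have hexp : Real.exp (-4) = ∑' k : ℕ, (-1:ℝ)^k * (4^k / k.factorial) := by
    rw [Real.exp_eq_exp_ℝ, ← (NormedSpace.expSeries_div_hasSum_exp (-4:ℝ)).tsum_eq]
    refine tsum_congr fun k => ?_
    rw [mul_div_assoc', ← mul_pow]
    norm_num
  rw [hexp]
  exact hlim
end

section
/- Let S be a subset of Fin n × Fin 4 such that exactly m_j ranks are represented by exactly j elements of S (j = 0,1,2,3,4). Then the number of permutations σ of Fin n × Fin 4 such that every card in S is a rank-fixed point of σ (i.e., rank(σ(c)) = rank(c) for all c ∈ S) equals 4^{m1} * 12^{m2} * 24^{m3} * 24^{m4} * (4n - |S|)!. -/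
/-- The number of ranks represented exactly `j` times in the subset `S` of the deck
`Fin n × Fin 4` (first coordinate = rank). -/
def rankCount (n : ℕ) (S : Finset (Fin n × Fin 4)) (j : ℕ) : ℕ :=
  (Finset.univ.filter fun r : Fin n => (S.filter fun c => c.1 = r).card = j).card


lemma count_extensions {α : Type*} [Fintype α] [DecidableEq α] (s : Finset α)
    (f : {x // x ∈ s} → α) (hf : Function.Injective f) :
    Fintype.card {σ : Equiv.Perm α // ∀ x : {x // x ∈ s}, σ x = f x}
      = Nat.factorial (Fintype.card α - s.card) := by
  classical
  let e₀ : ((↑s : Set α)) ≃ (Set.range f) := Equiv.ofInjective f hf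
  have key := Equiv.Set.compl (α := α) (β := α) (s := (↑s : Set α)) (t := Set.range f) e₀
  have h1 : Fintype.card {σ : Equiv.Perm α // ∀ x : {x // x ∈ s}, σ x = f x}
      = Fintype.card ((((↑s : Set α))ᶜ : Set α) ≃ ((Set.range f)ᶜ : Set α)) := by
    refine Fintype.card_congr ((Equiv.subtypeEquivRight ?_).trans key)
    intro e
    constructor
    · intro h x; simp [e₀, h x]
    · intro h x; simpa [e₀] using h x
  rw [h1]
  have hcards : Fintype.card (((↑s : Set α))ᶜ : Set α) = Fintype.card ((Set.range f)ᶜ : Set α) := by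
    rw [Fintype.card_compl_set, Fintype.card_compl_set]
    congr 1
    rw [Set.card_range_of_injective hf]; exact Fintype.card_congr (Equiv.subtypeEquivRight fun _ => Finset.mem_coe)
  rw [Fintype.card_equiv (Fintype.equivOfCardEq hcards)]
  congr 1
  rw [Fintype.card_compl_set]
  simp

lemma card_rank_injections (n : ℕ) (S : Finset (Fin n × Fin 4)) :
    (Finset.univ.filter fun f : {x // x ∈ S} → Fin n × Fin 4 =>
        Function.Injective f ∧ ∀ x : {x // x ∈ S}, (f x).1 = (x : Fin n × Fin 4).1).card
      = ∏ r : Fin n, Nat.descFactorial 4 (S.filter fun c => c.1 = r).card := by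
  classical
  rw [← Fintype.card_subtype]
  have E : {f : {x // x ∈ S} → Fin n × Fin 4 //
        Function.Injective f ∧ ∀ x : {x // x ∈ S}, (f x).1 = (x : Fin n × Fin 4).1}
      ≃ ((r : Fin n) → ({x // x ∈ S.filter fun c => c.1 = r} ↪ Fin 4)) := by
    refine
    { toFun := fun f r => ⟨fun x => (f.1 ⟨x.1, (Finset.mem_filter.mp x.2).1⟩).2, ?_⟩
      invFun := fun g =>
        ⟨fun x => ((x : Fin n × Fin 4).1,
          g (x : Fin n × Fin 4).1 ⟨x.1, Finset.mem_filter.mpr ⟨x.2, rfl⟩⟩), ?_, fun x => rfl⟩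
      left_inv := ?_
      right_inv := ?_ }
    · intro x y h
      have hx : (f.1 ⟨x.1, (Finset.mem_filter.mp x.2).1⟩).1 = r := by
        rw [f.2.2]; exact (Finset.mem_filter.mp x.2).2
      have hy : (f.1 ⟨y.1, (Finset.mem_filter.mp y.2).1⟩).1 = r := by
        rw [f.2.2]; exact (Finset.mem_filter.mp y.2).2
      have : f.1 ⟨x.1, (Finset.mem_filter.mp x.2).1⟩ = f.1 ⟨y.1, (Finset.mem_filter.mp y.2).1⟩ :=
        Prod.ext (hx.trans hy.symm) h
      have h3 := f.2.1 this
      rw [Subtype.mk_eq_mk] at h3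
      exact Subtype.ext h3
    · rintro ⟨⟨r, a⟩, hx⟩ ⟨⟨r', b⟩, hy⟩ h
      have h1 : r = r' := congrArg Prod.fst h
      subst h1
      have h2 : (g r) ⟨(r, a), Finset.mem_filter.mpr ⟨hx, rfl⟩⟩
          = (g r) ⟨(r, b), Finset.mem_filter.mpr ⟨hy, rfl⟩⟩ := congrArg Prod.snd h
      have h3 := (g r).injective h2
      rw [Subtype.mk_eq_mk] at h3
      exact Subtype.ext h3
    · intro f
      apply Subtype.ext
      funext x
      refine Prod.ext (f.2.2 x).symm ?_
      simp
      rfl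
    · intro g
      funext r
      apply DFunLike.ext
      rintro ⟨⟨r', a⟩, hx⟩
      have hr : r' = r := (Finset.mem_filter.mp hx).2
      subst hr
      rfl
  rw [Fintype.card_congr E, Fintype.card_pi]
  refine Finset.prod_congr rfl fun r _ => ?_
  rw [Fintype.card_embedding_eq, Fintype.card_coe, Fintype.card_fin]

theorem count_perms_rank_fixing_set (n : ℕ) (S : Finset (Fin n × Fin 4)) (m : Fin 5 → ℕ)
    (hm : ∀ j : Fin 5, rankCount n S (j : ℕ) = m j) :
    (Finset.univ.filter fun σ : Equiv.Perm (Fin n × Fin 4) =>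
        ∀ c ∈ S, (σ c).1 = c.1).card =
      4 ^ m 1 * 12 ^ m 2 * 24 ^ m 3 * 24 ^ m 4 * Nat.factorial (4 * n - S.card) := by
  classical
  have hk4 : ∀ r : Fin n, (S.filter fun c => c.1 = r).card ≤ 4 := by
    intro r
    calc (S.filter fun c => c.1 = r).card
        ≤ (Finset.univ : Finset (Fin 4)).card := by
          apply Finset.card_le_card_of_injOn Prod.snd (fun c _ => Finset.mem_univ _)
          intro c hc d hd h
          exact Prod.ext ((Finset.mem_filter.mp hc).2.trans
            (Finset.mem_filter.mp hd).2.symm) h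
      _ = 4 := by simp
  set T : Finset ({x // x ∈ S} → Fin n × Fin 4) := Finset.univ.filter fun f =>
    Function.Injective f ∧ ∀ x : {x // x ∈ S}, (f x).1 = (x : Fin n × Fin 4).1 with hT
  have step1 : (Finset.univ.filter fun σ : Equiv.Perm (Fin n × Fin 4) =>
        ∀ c ∈ S, (σ c).1 = c.1).card
      = ∑ f ∈ T, ((Finset.univ.filter fun σ : Equiv.Perm (Fin n × Fin 4) =>
          ∀ c ∈ S, (σ c).1 = c.1).filter fun σ =>
            (fun x : {x // x ∈ S} => σ (x : Fin n × Fin 4)) = f).card := by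
    refine Finset.card_eq_sum_card_fiberwise fun σ hσ => ?_
    rw [hT, Finset.mem_coe, Finset.mem_filter]
    refine ⟨Finset.mem_univ _, fun x y h => ?_, fun x => (Finset.mem_filter.mp (Finset.mem_coe.mp hσ)).2 x x.2⟩
    exact Subtype.ext (σ.injective h)
  have step2 : ∀ f ∈ T, ((Finset.univ.filter fun σ : Equiv.Perm (Fin n × Fin 4) =>
        ∀ c ∈ S, (σ c).1 = c.1).filter fun σ =>
          (fun x : {x // x ∈ S} => σ (x : Fin n × Fin 4)) = f).card
      = Nat.factorial (4 * n - S.card) := by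
    intro f hf
    rw [hT, Finset.mem_filter] at hf
    obtain ⟨-, hfi, hfr⟩ := hf
    have heq : ((Finset.univ.filter fun σ : Equiv.Perm (Fin n × Fin 4) =>
        ∀ c ∈ S, (σ c).1 = c.1).filter fun σ =>
          (fun x : {x // x ∈ S} => σ (x : Fin n × Fin 4)) = f)
        = Finset.univ.filter fun σ : Equiv.Perm (Fin n × Fin 4) =>
            ∀ x : {x // x ∈ S}, σ (x : Fin n × Fin 4) = f x := by
      ext σ
      simp only [Finset.mem_filter, Finset.mem_univ, true_and, funext_iff]
      constructor
      · exact fun h => h.2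
      · intro h
        exact ⟨fun c hc => by rw [h ⟨c, hc⟩, hfr ⟨c, hc⟩], h⟩
    rw [heq, ← Fintype.card_subtype, count_extensions S f hfi]
    congr 1
    rw [Fintype.card_prod, Fintype.card_fin, Fintype.card_fin, Nat.mul_comm]
  rw [step1, Finset.sum_congr rfl step2, Finset.sum_const, smul_eq_mul]
  rw [show T.card = ∏ r : Fin n, Nat.descFactorial 4 (S.filter fun c => c.1 = r).card
    from card_rank_injections n S]
  have hmaps : ∀ r ∈ (Finset.univ : Finset (Fin n)),
      (S.filter fun c => c.1 = r).card ∈ Finset.range 5 := fun r _ =>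
    Finset.mem_range.mpr (Nat.lt_succ_of_le (hk4 r))
  rw [← Finset.prod_fiberwise_of_maps_to hmaps fun r => Nat.descFactorial 4 (S.filter fun c => c.1 = r).card]
  have inner : ∀ j ∈ Finset.range 5,
      (∏ r ∈ Finset.univ.filter fun r => (S.filter fun c => c.1 = r).card = j,
        Nat.descFactorial 4 (S.filter fun c => c.1 = r).card)
      = Nat.descFactorial 4 j ^ rankCount n S j := by
    intro j _
    rw [Finset.prod_congr rfl fun r hr => by rw [(Finset.mem_filter.mp hr).2],
      Finset.prod_const]
    rfl
  rw [Finset.prod_congr rfl inner]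
  have h1 : rankCount n S 1 = m 1 := hm 1
  have h2 : rankCount n S 2 = m 2 := hm 2
  have h3 : rankCount n S 3 = m 3 := hm 3
  have h4 : rankCount n S 4 = m 4 := hm 4
  simp only [Finset.prod_range_succ, Finset.prod_range_zero, one_mul]
  rw [h1, h2, h3, h4]
  norm_num [Nat.descFactorial]
end

section
/- The number of permutations of Fin n × Fin 4 whose set of rank-fixed points contains a given subset S depends only on the multiset of counts {|S ∩ (rank r)| : r ∈ Fin n}; in particular, if two subsets S and S' have, for each j ∈ {0,1,2,3,4}, the same number of ranks represented exactly j times, then N(S) = N(S'). -/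
/-- `N n S` is the number of permutations of the deck whose set of rank-fixed points
contains `S`. -/
def N (n : ℕ) (S : Finset (Fin n × Fin 4)) : ℕ :=
  (Finset.univ.filter fun σ : Equiv.Perm (Fin n × Fin 4) =>
    ∀ c ∈ S, (σ c).1 = c.1).card

open Finset
theorem exists_perm_comp' {α : Type*} [Fintype α] [DecidableEq α] (f g : α → ℕ)
    (h : ∀ j, (univ.filter fun x => f x = j).card = (univ.filter fun x => g x = j).card) :
    ∃ e : Equiv.Perm α, ∀ x, g (e x) = f x := by
  classical
  have hc : ∀ j, Fintype.card {x // f x = j} = Fintype.card {x // g x = j} := by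
    intro j; simpa [Fintype.card_subtype] using h j
  let F : ∀ j, {x // f x = j} ≃ {x // g x = j} := fun j => Fintype.equivOfCardEq (hc j)
  refine ⟨(Equiv.sigmaFiberEquiv f).symm.trans
    ((Equiv.sigmaCongrRight F).trans (Equiv.sigmaFiberEquiv g)), fun x => ?_⟩
  exact (F (f x) ⟨x, rfl⟩).prop

theorem exists_perm_mem_iff' {α : Type*} [Fintype α] [DecidableEq α] (s t : Finset α)
    (h : s.card = t.card) : ∃ e : Equiv.Perm α, ∀ x, x ∈ s ↔ e x ∈ t := by
  classical
  have key : ∀ (u : Finset α) (j : ℕ),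
      (univ.filter fun x => (if x ∈ u then 1 else 0) = j).card =
        if j = 1 then u.card else if j = 0 then Fintype.card α - u.card else 0 := by
    intro u j
    split_ifs with h1 h0
    · subst h1
      congr 1
      ext x
      by_cases hx : x ∈ u <;> simp [hx]
    · subst h0
      rw [← Finset.card_compl u]
      congr 1
      ext x
      by_cases hx : x ∈ u <;> simp [hx]
    · rw [Finset.card_eq_zero, Finset.filter_eq_empty_iff]
      intro x _
      by_cases hx : x ∈ u <;> simp [hx] <;> omega
  obtain ⟨e, he⟩ := exists_perm_comp' (fun x => if x ∈ s then (1:ℕ) else 0)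
      (fun x => if x ∈ t then (1:ℕ) else 0) (by intro j; rw [key, key, h])
  refine ⟨e, fun x => ?_⟩
  have := he x
  by_cases hx : x ∈ s <;> by_cases hy : e x ∈ t <;> simp_all

set_option maxHeartbeats 2000000 in
theorem N_depends_only_on_profile (n : ℕ) (S S' : Finset (Fin n × Fin 4))
    (h : ∀ j : Fin 5, rankCount n S (j : ℕ) = rankCount n S' (j : ℕ)) :
    N n S = N n S' := by
  classical
  -- counts are ≤ 4
  have hle : ∀ (T : Finset (Fin n × Fin 4)) (r : Fin n),
      (T.filter fun c => c.1 = r).card ≤ 4 := by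
    intro T r
    have hsub : (T.filter fun c => c.1 = r) ⊆ ({r} ×ˢ univ) := by
      intro c hc
      simp only [Finset.mem_filter] at hc
      rw [Finset.mem_product]
      exact ⟨by simp [hc.2], Finset.mem_univ _⟩
    calc (T.filter fun c => c.1 = r).card ≤ ({r} ×ˢ (univ : Finset (Fin 4))).card :=
          Finset.card_le_card hsub
      _ = 4 := by rw [Finset.card_product, Finset.card_singleton, Finset.card_univ]; rfl
  have hfib : ∀ j, ((univ : Finset (Fin n)).filter
        fun r => (S.filter fun c => c.1 = r).card = j).card =
      (univ.filter fun r => (S'.filter fun c => c.1 = r).card = j).card := by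
    intro j
    by_cases hj : j ≤ 4
    · have := h ⟨j, by omega⟩
      simpa [rankCount] using this
    · rw [Finset.filter_false_of_mem, Finset.filter_false_of_mem]
      · intro r _; intro hEq; exact hj (hEq ▸ hle S' r)
      · intro r _; intro hEq; exact hj (hEq ▸ hle S r)
  have Hpi := exists_perm_comp' (fun r => (S.filter fun c => c.1 = r).card)
      (fun r => (S'.filter fun c => c.1 = r).card) hfib
  obtain ⟨π, hπ⟩ := Hpi
  -- rows of suits
  have hrowcard : ∀ (T : Finset (Fin n × Fin 4)) (r : Fin n),
      ((T.filter fun c => c.1 = r).image Prod.snd).card = (T.filter fun c => c.1 = r).card := by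
    intro T r
    apply Finset.card_image_of_injOn
    intro a ha b hb hab
    simp only [Finset.mem_coe, Finset.mem_filter] at ha hb
    exact Prod.ext (ha.2.trans hb.2.symm) hab
  have hrowmem : ∀ (T : Finset (Fin n × Fin 4)) (r : Fin n) (s : Fin 4),
      s ∈ (T.filter fun c => c.1 = r).image Prod.snd ↔ (r, s) ∈ T := by
    intro T r s
    simp only [Finset.mem_image, Finset.mem_filter]
    constructor
    · rintro ⟨⟨a, b⟩, ⟨hm, h1⟩, h2⟩
      cases h1; cases h2; exact hm
    · intro hm; exact ⟨(r, s), ⟨hm, rfl⟩, rfl⟩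
  have hcard : ∀ r : Fin n, ((S.filter fun c => c.1 = r).image Prod.snd).card =
      ((S'.filter fun c => c.1 = π r).image Prod.snd).card := by
    intro r; rw [hrowcard, hrowcard]; exact (hπ r).symm
  choose f hf using fun r => exists_perm_mem_iff' _ _ (hcard r)
  let τ : Equiv.Perm (Fin n × Fin 4) := Equiv.prodShear π f
  have hτapp : ∀ c : Fin n × Fin 4, τ c = (π c.1, f c.1 c.2) := fun c => rfl
  have hτmem : ∀ c : Fin n × Fin 4, c ∈ S ↔ τ c ∈ S' := by
    rintro ⟨r, s⟩
    rw [← hrowmem S r s, hf r s, hτapp, hrowmem]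
  have hτmem' : ∀ c : Fin n × Fin 4, τ.symm c ∈ S ↔ c ∈ S' := by
    intro c
    rw [hτmem (τ.symm c), Equiv.apply_symm_apply]
  unfold N
  refine Finset.card_bij' (fun σ _ => τ * σ * τ⁻¹) (fun σ _ => τ⁻¹ * σ * τ) ?_ ?_ ?_ ?_
  · intro σ hσ
    simp only [Finset.mem_filter, Finset.mem_univ, true_and] at hσ ⊢
    intro c hc
    have h1 : τ.symm c ∈ S := (hτmem' c).mpr hc
    have h2 : (σ (τ.symm c)).1 = (τ.symm c).1 := hσ _ h1
    show (τ (σ (τ⁻¹ c))).1 = c.1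
    have : (τ⁻¹ : Equiv.Perm (Fin n × Fin 4)) c = τ.symm c := rfl
    rw [this, hτapp, h2]
    have := congrArg Prod.fst (Equiv.apply_symm_apply τ c)
    rw [hτapp] at this
    exact this
  · intro σ hσ
    simp only [Finset.mem_filter, Finset.mem_univ, true_and] at hσ ⊢
    intro c hc
    have h2 : (σ (τ c)).1 = (τ c).1 := hσ _ ((hτmem c).mp hc)
    show (τ.symm (σ (τ c))).1 = c.1
    have hs : ∀ x : Fin n × Fin 4, (τ.symm x).1 = π.symm x.1 := fun x => rfl
    rw [hs, h2, hτapp]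
    simp
  · intro σ _; group
  · intro σ _; group
end
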